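/- For the pigeonhole search problem PH_n (with n ≥ 4 a power of 2), the classical adversary bound satisfies CAdv(PH_n) ≤ 2·log₂(n/2). Concretely: assigning weight m_x(i) = 2/n to every input x and every bit position i ∈ [n·log₂(n/2)] gives a feasible solution to the CAdv minimization problem with objective value 2·log₂(n/2). -/

import Mathlib

open scoped Classical

open Finset

/-!
If `x` and `y` have disjoint certificate sets, then `x` is injective on the blocks where `x`
and `y` agree, so by pigeonhole at most `2^(k-1)` of the `n = 2^k` blocks agree. Each of the
remaining `n/2` blocks contains a differing bit, and these bits carry weight `2/n` each.
-/

section Pigeonhole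

variable {ι κ β : Type*} [Fintype ι] [DecidableEq β]

theorem card_filter_eq_le_card_of_not_exists_collision [Fintype β] {x y : ι → β}
    (h : ¬ ∃ i j : ι, i ≠ j ∧ x i = x j ∧ x i = y i ∧ x j = y j) :
    #{i | x i = y i} ≤ Fintype.card β := by
  refine (card_le_card_of_injOn x (fun _ _ => mem_coe.2 (mem_univ _)) ?_).trans_eq card_univ
  intro i hi j hj hij
  by_contra hne
  exact h ⟨i, j, hne, hij, (mem_filter.1 hi).2, (mem_filter.1 hj).2⟩

theorem card_filter_ne_le_card_filter_uncurry_ne [Fintype κ] (x y : ι → κ → β) :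
    #{i | x i ≠ y i} ≤ #{p : ι × κ | x p.1 p.2 ≠ y p.1 p.2} := by
  refine card_le_card_of_surjOn Prod.fst fun i hi => ?_
  obtain ⟨j, hj⟩ := Function.ne_iff.1 (mem_filter.1 hi).2
  exact ⟨(i, j), by simpa using hj, rfl⟩

theorem card_sub_card_le_card_filter_ne_of_not_exists_collision [Fintype κ] [Fintype β]
    {x y : ι → κ → β} (h : ¬ ∃ i j : ι, i ≠ j ∧ x i = x j ∧ x i = y i ∧ x j = y j) :
    Fintype.card ι - Fintype.card (κ → β) ≤ #{p : ι × κ | x p.1 p.2 ≠ y p.1 p.2} := by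
  have hsplit : #{i | x i = y i} + #{i | x i ≠ y i} = Fintype.card ι :=
    card_filter_add_card_filter_not _
  have hagree := card_filter_eq_le_card_of_not_exists_collision h
  have hdiffer := card_filter_ne_le_card_filter_uncurry_ne x y
  omega

end Pigeonhole

/-- Feasibility of the constant weight scheme `m_x(i) = 2/n` for the classical adversary
bound of the pigeonhole problem `PH_n` (`n = 2^k ≥ 4`, blocks of `log₂(n/2) = k-1` bits):
the objective value is `2·log₂(n/2) = 2(k-1)`, and for every pair of inputs with disjoint
certificate sets the feasibility constraint holds.  Hence `CAdv(PH_n) ≤ 2·log₂(n/2)`. -/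
theorem stmt_8 (k n : ℕ) (hk : 2 ≤ k) (hn : n = 2 ^ k) :
    (∀ _x : Fin n → Fin (k - 1) → Bool,
        ∑ _p : Fin n × Fin (k - 1), (2 / (n : ℝ)) ≤ 2 * ((k : ℝ) - 1)) ∧
    (∀ x y : Fin n → Fin (k - 1) → Bool,
        (¬ ∃ i j : Fin n, i ≠ j ∧ x i = x j ∧ x i = y i ∧ x j = y j) →
        1 ≤ ∑ _p ∈ Finset.univ.filter
              (fun p : Fin n × Fin (k - 1) => x p.1 p.2 ≠ y p.1 p.2),
              min (2 / (n : ℝ)) (2 / (n : ℝ))) := by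
  have hk1 : 1 ≤ k := by omega
  have hn_half : n = 2 ^ (k - 1) * 2 := by rw [hn, ← pow_succ, Nat.sub_add_cancel hk1]
  have hnR : (0 : ℝ) < n := by rw [hn]; positivity
  refine ⟨fun _ => ?_, fun x y hxy => ?_⟩
  · rw [sum_const, card_univ, Fintype.card_prod, Fintype.card_fin, Fintype.card_fin,
      nsmul_eq_mul]
    push_cast [hk1]
    field_simp
    exact le_rfl
  · have hdiffer := card_sub_card_le_card_filter_ne_of_not_exists_collision hxy
    simp only [Fintype.card_fin, Fintype.card_fun, Fintype.card_bool] at hdiffer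
    rw [sum_const, nsmul_eq_mul, min_self]
    calc (1 : ℝ) = ((n - 2 ^ (k - 1) : ℕ) : ℝ) * (2 / n) := by
          rw [hn_half, Nat.mul_two, Nat.add_sub_cancel]; push_cast; field_simp; norm_num
      _ ≤ _ := by gcongr
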